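/- Fix 0 ≤ s < 1 with √(1−s²) > (n−1)/n, and let A_s = {(x₁,x₂,x₃) ∈ S² : x₃ ≤ −√(1−s²)}. Suppose the initial sphere points of a continued trajectory of the planar point-vortex gradient flow satisfy P_i(0) ∈ A_s for all i = 1,…,2n. Then the trajectory annihilates all vortices in finite time: it is impossible for a continued trajectory to retain a nonempty set of vortices for all t ≥ 0; after finitely many collision times, occurring before a finite time, no vortices remain. -/

import Mathlib

open Finset
open scoped Classical

noncomputable section

abbrev E2 := EuclideanSpace ℝ (Fin 2)
abbrev E3 := EuclideanSpace ℝ (Fin 3)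

/-- Velocity field of the planar point-vortex gradient flow. -/
def pvVel {N : ℕ} (d : Fin N → ℤ) (q : Fin N → E2) (i : Fin N) : E2 :=
  ((1 + ‖q i‖ ^ 2) ^ 2 / 2) •
    ((1 + ‖q i‖ ^ 2)⁻¹ • q i +
      (d i : ℝ) • ∑ j ∈ univ.erase i, (d j : ℝ) • (‖q i - q j‖ ^ 2)⁻¹ • (q i - q j))

/-- Inverse stereographic projection: the sphere point corresponding to `p ∈ ℝ²`. -/
def sph (p : E2) : E3 :=
  (WithLp.equiv 2 (Fin 3 → ℝ)).symm
    ![2 * p 0 / (1 + ‖p‖ ^ 2), 2 * p 1 / (1 + ‖p‖ ^ 2), (‖p‖ ^ 2 - 1) / (1 + ‖p‖ ^ 2)]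
/-- A continued trajectory of the planar point-vortex gradient flow on `S²` (in
stereographic coordinates), starting from `2n` vortices of degrees `±1` summing to zero:
there are collision times `0 = T 0 < T 1 < ⋯ < T m`; on each interval
`[T k, T (k+1))` (and on `[T m, ∞)` for the last stage) the `N k` vortices solve the
point-vortex gradient flow with pairwise distinct positions, extending continuously to the
collision time; at each collision time the vortices are grouped into clusters by
coincidence of limit positions, some cluster has at least two vortices, every cluster has
total degree in `{-1,0,1}` (hypothesis (H)), clusters of total degree `0` are deleted and
clusters of total degree `±1` are replaced by a single vortex of that degree at the common
limit position (the cluster map is `cl`, sending each old vortex to its successor, or to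
`none` if its cluster is annihilated). -/
structure PVTrajectory (n : ℕ) where
  /-- number of collision times -/
  m : ℕ
  /-- `T 0 = 0` and `T 1 < ⋯ < T m` are the collision times -/
  T : ℕ → ℝ
  /-- number of vortices at stage `k` -/
  N : ℕ → ℕ
  /-- degrees of the stage-`k` vortices -/
  deg : (k : ℕ) → Fin (N k) → ℤ
  /-- positions of the stage-`k` vortices -/
  pos : (k : ℕ) → ℝ → Fin (N k) → E2
  /-- limit positions of the stage-`k` vortices as `t → T (k+1)⁻` -/
  lim : (k : ℕ) → Fin (N k) → E2
  /-- the cluster/successor map at the collision time `T (k+1)` -/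
  cl : (k : ℕ) → Fin (N k) → Option (Fin (N (k + 1)))
  T_zero : T 0 = 0
  T_mono : ∀ k < m, T k < T (k + 1)
  N_zero : N 0 = 2 * n
  deg_pm : ∀ k ≤ m, ∀ i, deg k i = 1 ∨ deg k i = -1
  deg_sum : ∀ k ≤ m, ∑ i, deg k i = 0
  distinct : ∀ k < m, ∀ t ∈ Set.Ico (T k) (T (k + 1)),
    ∀ i j : Fin (N k), i ≠ j → pos k t i ≠ pos k t j
  ode : ∀ k < m, ∀ t ∈ Set.Ico (T k) (T (k + 1)), ∀ i : Fin (N k),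
    HasDerivWithinAt (fun s => pos k s i)
      (pvVel (deg k) (fun j => pos k t j) i) (Set.Ico (T k) (T (k + 1))) t
  distinct_last : ∀ t ∈ Set.Ici (T m), ∀ i j : Fin (N m), i ≠ j → pos m t i ≠ pos m t j
  ode_last : ∀ t ∈ Set.Ici (T m), ∀ i : Fin (N m),
    HasDerivWithinAt (fun s => pos m s i)
      (pvVel (deg m) (fun j => pos m t j) i) (Set.Ici (T m)) t
  lim_spec : ∀ k < m, ∀ i : Fin (N k),
    Filter.Tendsto (fun s => pos k s i)
      (nhdsWithin (T (k + 1)) (Set.Iio (T (k + 1)))) (nhds (lim k i))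
  /-- at each collision time some cluster contains at least two vortices -/
  collide : ∀ k < m, ∃ i j : Fin (N k), i ≠ j ∧ lim k i = lim k j
  /-- hypothesis (H): every cluster has total degree in `{-1,0,1}` -/
  hypH : ∀ k < m, ∀ i : Fin (N k),
    (∑ j ∈ univ.filter fun j => lim k j = lim k i, deg k j) ∈ ({-1, 0, 1} : Set ℤ)
  /-- vortices in the same cluster have the same successor -/
  cl_resp : ∀ k < m, ∀ i j : Fin (N k), lim k i = lim k j → cl k i = cl k j
  /-- vortices with the same successor are in the same cluster -/
  cl_inj : ∀ k < m, ∀ i j : Fin (N k), ∀ v : Fin (N (k + 1)),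
    cl k i = some v → cl k j = some v → lim k i = lim k j
  /-- every stage-`(k+1)` vortex arises from a cluster -/
  cl_surj : ∀ k < m, ∀ v : Fin (N (k + 1)), ∃ i : Fin (N k), cl k i = some v
  /-- exactly the clusters of total degree `0` are annihilated -/
  cl_none : ∀ k < m, ∀ i : Fin (N k),
    cl k i = none ↔ (∑ j ∈ univ.filter fun j => lim k j = lim k i, deg k j) = 0
  /-- the successor vortex carries the total degree of its cluster -/
  cl_deg : ∀ k < m, ∀ i : Fin (N k), ∀ v : Fin (N (k + 1)), cl k i = some v →
    deg (k + 1) v = ∑ j ∈ univ.filter fun j => lim k j = lim k i, deg k j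
  /-- the successor vortex starts at the common limit position of its cluster -/
  cl_pos : ∀ k < m, ∀ i : Fin (N k), ∀ v : Fin (N (k + 1)), cl k i = some v →
    pos (k + 1) (T (k + 1)) v = lim k i

/-!
Let `H(t) = ∑ᵢ x₃(Pᵢ(t))` be the total height of the sphere points. Along the flow the
interaction terms cancel in pairs, and because the degrees are `±1` with zero sum, `H' = H`.
So on each stage `H(t) = H(T_k) e^{t - T_k}`: while `H ≤ 0` it can only decrease, and at a
collision every deleted vortex carried a height `≥ -1`, so `H + N` does not increase from one
stage to the next. Initially `H + N ≤ 2n(1 - √(1-s²)) < 2`, hence every stage with at least two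
vortices has `H < 0`. On the last stage this would contradict `H ≥ -N` as `t → ∞`; so the last
stage has fewer than two vortices, and having zero total degree it has none.
-/

open scoped RealInnerProductSpace

/-- The height `x₃` of the sphere point `sph p`. -/
def sphereHeight (p : E2) : ℝ := (‖p‖ ^ 2 - 1) / (1 + ‖p‖ ^ 2)

lemma neg_one_le_sphereHeight (p : E2) : -1 ≤ sphereHeight p := by
  rw [sphereHeight, le_div_iff₀ (by positivity)]
  nlinarith [sq_nonneg ‖p‖]

lemma continuous_sphereHeight : Continuous sphereHeight :=
  Continuous.div (by fun_prop) (by fun_prop) fun p => by positivity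

lemma HasDerivWithinAt.sphereHeight {c : ℝ → E2} {v : E2} {S : Set ℝ} {t : ℝ}
    (h : HasDerivWithinAt c v S t) :
    HasDerivWithinAt (fun s => sphereHeight (c s))
      (4 / (1 + ‖c t‖ ^ 2) ^ 2 * ⟪c t, v⟫) S t := by
  have hpos : 0 < 1 + ‖c t‖ ^ 2 := by positivity
  refine (h.norm_sq.sub_const 1 |>.div (h.norm_sq.const_add 1) hpos.ne').congr_deriv ?_
  field_simp
  ring

lemma inner_sub_add_inner_sub {F : Type*} [NormedAddCommGroup F] [InnerProductSpace ℝ F]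
    (x y : F) : ⟪x, x - y⟫ + ⟪y, y - x⟫ = ‖x - y‖ ^ 2 := by
  rw [← neg_sub x y, inner_neg_right, ← sub_eq_add_neg, ← inner_sub_left,
    real_inner_self_eq_norm_sq]

lemma Finset.sum_sum_erase_comm {ι M : Type*} [Fintype ι] [DecidableEq ι] [AddCommMonoid M]
    (c : ι → ι → M) : ∑ i, ∑ j ∈ univ.erase i, c i j = ∑ i, ∑ j ∈ univ.erase i, c j i :=
  Finset.sum_comm' fun i j => by simp [ne_comm]

lemma Finset.sum_sum_erase_mul_of_sum_eq_zero {ι R : Type*} [Fintype ι] [DecidableEq ι]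
    [CommRing R] {d : ι → R} (hd : ∑ i, d i = 0) :
    ∑ i, ∑ j ∈ univ.erase i, d i * d j = -∑ i, d i ^ 2 := by
  simp only [← Finset.mul_sum, Finset.sum_erase_eq_sub (Finset.mem_univ _), hd]
  simp only [mul_zero, zero_sub, ← sq, Finset.sum_neg_distrib]

lemma sum_inner_pvVel {N : ℕ} (d : Fin N → ℤ) (q : Fin N → E2)
    (hd : ∀ i, d i = 1 ∨ d i = -1) (hsum : ∑ i, d i = 0)
    (hq : ∀ i j, i ≠ j → q i ≠ q j) :
    ∑ i, 4 / (1 + ‖q i‖ ^ 2) ^ 2 * ⟪q i, pvVel d q i⟫ = ∑ i, sphereHeight (q i) := by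
  set c : Fin N → Fin N → ℝ := fun i j =>
    2 * (d i * d j) * ((‖q i - q j‖ ^ 2)⁻¹ * ⟪q i, q i - q j⟫) with hc
  have hterm : ∀ i, 4 / (1 + ‖q i‖ ^ 2) ^ 2 * ⟪q i, pvVel d q i⟫
      = 1 + sphereHeight (q i) + ∑ j ∈ univ.erase i, c i j := by
    intro i
    set A := ∑ j ∈ univ.erase i, (d j : ℝ) * ((‖q i - q j‖ ^ 2)⁻¹ * ⟪q i, q i - q j⟫)
    have hcA : ∑ j ∈ univ.erase i, c i j = 2 * d i * A := by
      rw [Finset.mul_sum]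
      exact Finset.sum_congr rfl fun j _ => by ring
    have hinner : ⟪q i, pvVel d q i⟫
        = (1 + ‖q i‖ ^ 2) ^ 2 / 2 * ((1 + ‖q i‖ ^ 2)⁻¹ * ‖q i‖ ^ 2 + d i * A) := by
      simp only [pvVel, inner_smul_right, inner_add_right, inner_sum, real_inner_self_eq_norm_sq,
        A]
    have hpos : 0 < 1 + ‖q i‖ ^ 2 := by positivity
    rw [hinner, hcA, sphereHeight]
    field_simp
    ring
  have hpair : ∀ i j, i ≠ j → c i j + c j i = 2 * (d i * d j) := by
    intro i j hij
    have hne : ‖q i - q j‖ ^ 2 ≠ 0 := by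
      simpa [sub_eq_zero] using hq i j hij
    simp only [hc, norm_sub_rev (q j), ← inner_sub_add_inner_sub (q i) (q j)] at hne ⊢
    field_simp
  have hdR : ∑ i, (d i : ℝ) = 0 := by exact_mod_cast hsum
  have hsq : ∀ i, (d i : ℝ) ^ 2 = 1 := fun i => by rcases hd i with h | h <;> simp [h]
  have hcross : 2 * ∑ i, ∑ j ∈ univ.erase i, c i j
      = 2 * ∑ i, ∑ j ∈ univ.erase i, (d i : ℝ) * d j := by
    rw [two_mul]
    nth_rewrite 2 [Finset.sum_sum_erase_comm]
    rw [← Finset.sum_add_distrib, Finset.mul_sum]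
    refine Finset.sum_congr rfl fun i _ => ?_
    rw [← Finset.sum_add_distrib, Finset.mul_sum]
    exact Finset.sum_congr rfl fun j hj => hpair i j (Finset.ne_of_mem_erase hj).symm
  rw [Finset.sum_sum_erase_mul_of_sum_eq_zero hdR] at hcross
  simp only [hsq, Finset.sum_const, Finset.card_univ, Fintype.card_fin, nsmul_eq_mul,
    mul_one] at hcross
  simp only [hterm, Finset.sum_add_distrib]
  simp only [Finset.sum_const, Finset.card_univ, Fintype.card_fin, nsmul_eq_mul, mul_one]
  linarith

lemma hasDerivWithinAt_sum_sphereHeight {N : ℕ} {d : Fin N → ℤ} {pos : ℝ → Fin N → E2}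
    {S : Set ℝ} {t : ℝ} (hd : ∀ i, d i = 1 ∨ d i = -1) (hsum : ∑ i, d i = 0)
    (hdist : ∀ i j, i ≠ j → pos t i ≠ pos t j)
    (hode : ∀ i, HasDerivWithinAt (fun s => pos s i) (pvVel d (fun j => pos t j) i) S t) :
    HasDerivWithinAt (fun u => ∑ i, sphereHeight (pos u i)) (∑ i, sphereHeight (pos t i)) S t := by
  rw [← sum_inner_pvVel d (pos t) hd hsum hdist]
  exact HasDerivWithinAt.fun_sum fun i _ => (hode i).sphereHeight

lemma eq_mul_exp_sub_of_hasDerivWithinAt_self {S : Set ℝ} (hS : Convex ℝ S) {F : ℝ → ℝ}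
    (hF : ∀ t ∈ S, HasDerivWithinAt F (F t) S t) {a t : ℝ} (ha : a ∈ S) (ht : t ∈ S) :
    F t = F a * Real.exp (t - a) := by
  have hG : ∀ u ∈ S, HasDerivWithinAt (fun u => F u * Real.exp (-u)) 0 S u := by
    intro u hu
    have hexp : HasDerivAt (fun u : ℝ => Real.exp (-u)) (-Real.exp (-u)) u := by
      simpa using (hasDerivAt_neg u).exp
    exact ((hF u hu).mul hexp.hasDerivWithinAt).congr_deriv (by ring)
  have hconst := hS.norm_image_sub_le_of_norm_hasDerivWithin_le hG (C := 0) (by simp) ha ht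
  rw [zero_mul, norm_le_zero_iff, sub_eq_zero] at hconst
  calc F t = F t * Real.exp (-t) * Real.exp t := by
        rw [mul_assoc, ← Real.exp_add, neg_add_cancel, Real.exp_zero, mul_one]
    _ = F a * Real.exp (t - a) := by
        rw [hconst, mul_assoc, ← Real.exp_add, neg_add_eq_sub]

lemma nonneg_of_forall_neg_le_mul_exp {b C : ℝ} (h : ∀ x, 0 ≤ x → -C ≤ b * Real.exp x) :
    0 ≤ b := by
  by_contra! hb
  have hC : 0 ≤ C := by
    have := h 0 le_rfl
    rw [Real.exp_zero, mul_one] at this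
    linarith
  have hx : 0 ≤ C / -b := div_nonneg hC (by linarith)
  have hle : b * Real.exp (C / -b) ≤ b * (C / -b + 1) :=
    mul_le_mul_of_nonpos_left (by linarith [Real.add_one_le_exp (C / -b)]) hb.le
  have hval : b * (C / -b + 1) = -C + b := by field_simp [hb.ne]
  linarith [h _ hx]

lemma ne_one_of_signs_sum_eq_zero {N : ℕ} {d : Fin N → ℤ} (hd : ∀ i, d i = 1 ∨ d i = -1)
    (hsum : ∑ i, d i = 0) : N ≠ 1 := by
  rintro rfl
  rw [Fin.sum_univ_one] at hsum
  rcases hd 0 with h | h <;> omega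

namespace PVTrajectory

open Topology

variable {n : ℕ} (traj : PVTrajectory n)

def totalHeight (k : ℕ) (t : ℝ) : ℝ := ∑ i, sphereHeight (traj.pos k t i)

lemma neg_N_le_totalHeight (k : ℕ) (t : ℝ) : -(traj.N k : ℝ) ≤ traj.totalHeight k t := by
  simpa [totalHeight] using Finset.card_nsmul_le_sum (univ : Finset (Fin (traj.N k))) _ (-1)
    fun i _ => neg_one_le_sphereHeight _

lemma totalHeight_eq_mul_exp {k : ℕ} (hk : k < traj.m) {t : ℝ}
    (ht : t ∈ Set.Ico (traj.T k) (traj.T (k + 1))) :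
    traj.totalHeight k t = traj.totalHeight k (traj.T k) * Real.exp (t - traj.T k) :=
  eq_mul_exp_sub_of_hasDerivWithinAt_self (convex_Ico _ _)
    (fun u hu => hasDerivWithinAt_sum_sphereHeight (traj.deg_pm k hk.le) (traj.deg_sum k hk.le)
      (traj.distinct k hk u hu) (traj.ode k hk u hu))
    ⟨le_rfl, traj.T_mono k hk⟩ ht

lemma totalHeight_last_eq_mul_exp {t : ℝ} (ht : traj.T traj.m ≤ t) :
    traj.totalHeight traj.m t =
      traj.totalHeight traj.m (traj.T traj.m) * Real.exp (t - traj.T traj.m) :=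
  eq_mul_exp_sub_of_hasDerivWithinAt_self (convex_Ici _)
    (fun u hu => hasDerivWithinAt_sum_sphereHeight (traj.deg_pm _ le_rfl)
      (traj.deg_sum _ le_rfl) (traj.distinct_last u hu) (traj.ode_last u hu))
    Set.self_mem_Ici ht

lemma sum_sphereHeight_lim {k : ℕ} (hk : k < traj.m) :
    ∑ i, sphereHeight (traj.lim k i) =
      traj.totalHeight k (traj.T k) * Real.exp (traj.T (k + 1) - traj.T k) := by
  have hlt := traj.T_mono k hk
  have hlim : Filter.Tendsto (traj.totalHeight k) (𝓝[<] traj.T (k + 1))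
      (𝓝 (∑ i, sphereHeight (traj.lim k i))) :=
    tendsto_finsetSum _ fun i _ =>
      continuous_sphereHeight.continuousAt.tendsto.comp (traj.lim_spec k hk i)
  have hexp : Filter.Tendsto (traj.totalHeight k) (𝓝[<] traj.T (k + 1))
      (𝓝 (traj.totalHeight k (traj.T k) * Real.exp (traj.T (k + 1) - traj.T k))) := by
    have hcont : Continuous fun t => traj.totalHeight k (traj.T k) * Real.exp (t - traj.T k) := by
      fun_prop
    refine Filter.Tendsto.congr' ?_ ((hcont.tendsto _).mono_left nhdsWithin_le_nhds)
    filter_upwards [Ioo_mem_nhdsLT hlt] with t ht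
    exact (traj.totalHeight_eq_mul_exp hk (Set.Ioo_subset_Ico_self ht)).symm
  exact tendsto_nhds_unique hlim hexp

lemma totalHeight_succ_add_N_le {k : ℕ} (hk : k < traj.m) :
    traj.totalHeight (k + 1) (traj.T (k + 1)) + traj.N (k + 1) ≤
      ∑ i, sphereHeight (traj.lim k i) + traj.N k := by
  choose ι hι using traj.cl_surj k hk
  have hinj : Function.Injective ι := fun v w h =>
    Option.some_injective _ ((hι v).symm.trans (h ▸ hι w))
  have hsucc :
      traj.totalHeight (k + 1) (traj.T (k + 1)) = ∑ v, sphereHeight (traj.lim k (ι v)) :=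
    Finset.sum_congr rfl fun v _ => by rw [traj.cl_pos k hk _ v (hι v)]
  have hle : ∑ v, (sphereHeight (traj.lim k (ι v)) + 1) ≤
      ∑ i, (sphereHeight (traj.lim k i) + 1) := by
    rw [← Finset.sum_image (f := fun i => sphereHeight (traj.lim k i) + 1)
      fun v _ w _ h => hinj h]
    exact Finset.sum_le_univ_sum_of_nonneg fun i => by
      linarith [neg_one_le_sphereHeight (traj.lim k i)]
  simpa [hsucc, Finset.sum_add_distrib] using hle

lemma two_le_N {k : ℕ} (hk : k < traj.m) : 2 ≤ traj.N k := by
  obtain ⟨i, j, hij, -⟩ := traj.collide k hk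
  exact Nat.succ_le_of_lt (by simpa using Fintype.one_lt_card_iff.2 ⟨i, j, hij⟩)

lemma totalHeight_add_N_lt_two (h0 : traj.totalHeight 0 (traj.T 0) + traj.N 0 < 2) :
    ∀ k ≤ traj.m, traj.totalHeight k (traj.T k) + traj.N k < 2 := by
  intro k hk
  induction k with
  | zero => exact h0
  | succ k ih =>
    have hk' : k < traj.m := hk
    have hprev := ih hk'.le
    have hN : (2 : ℝ) ≤ traj.N k := by exact_mod_cast traj.two_le_N hk'
    have hexp : 1 ≤ Real.exp (traj.T (k + 1) - traj.T k) :=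
      Real.one_le_exp (sub_nonneg.2 (traj.T_mono k hk').le)
    have hlim := traj.sum_sphereHeight_lim hk'
    nlinarith [traj.totalHeight_succ_add_N_le hk']

lemma totalHeight_last_nonneg : 0 ≤ traj.totalHeight traj.m (traj.T traj.m) :=
  nonneg_of_forall_neg_le_mul_exp fun x hx => by
    simpa [traj.totalHeight_last_eq_mul_exp (le_add_of_nonneg_right hx)] using
      traj.neg_N_le_totalHeight traj.m (traj.T traj.m + x)

end PVTrajectory

theorem annihilation_of_clustered_vortices_general
    (n : ℕ) (s : ℝ)
    (hcap : Real.sqrt (1 - s ^ 2) > ((n : ℝ) - 1) / n)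
    (traj : PVTrajectory n)
    (hinit : ∀ i : Fin (traj.N 0),
      (‖traj.pos 0 0 i‖ ^ 2 - 1) / (1 + ‖traj.pos 0 0 i‖ ^ 2) ≤ -Real.sqrt (1 - s ^ 2)) :
    traj.N traj.m = 0 := by
  set a := Real.sqrt (1 - s ^ 2)
  have hna : (n : ℝ) - 1 < n * a := by
    rcases n.eq_zero_or_pos with rfl | hn
    · simp
    · rwa [gt_iff_lt, div_lt_iff₀' (by positivity)] at hcap
  have hinit_sum : traj.totalHeight 0 (traj.T 0) ≤ traj.N 0 * -a := by
    simpa [PVTrajectory.totalHeight, sphereHeight, traj.T_zero] using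
      Finset.sum_le_card_nsmul univ _ (-a) fun i _ => hinit i
  have hN0 : (traj.N 0 : ℝ) = 2 * n := by exact_mod_cast traj.N_zero
  have hlast := traj.totalHeight_add_N_lt_two (by rw [hN0] at hinit_sum ⊢; linarith) _ le_rfl
  have hlt : traj.N traj.m < 2 := by
    exact_mod_cast (by linarith [traj.totalHeight_last_nonneg] : (traj.N traj.m : ℝ) < 2)
  have hne := ne_one_of_signs_sum_eq_zero (traj.deg_pm _ le_rfl) (traj.deg_sum _ le_rfl)
  omega

/-- Annihilation theorem: if `√(1-s²) > (n-1)/n` and all `2n` initial sphere points lie in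
the polar cap `A_s = {x₃ ≤ -√(1-s²)}`, then a continued trajectory of the point-vortex
gradient flow cannot retain a nonempty set of vortices for all time: after its finitely
many collision times no vortices remain. -/
theorem annihilation_of_clustered_vortices
    (n : ℕ) (hn : 1 ≤ n) (s : ℝ) (hs0 : 0 ≤ s) (hs1 : s < 1)
    (hcap : Real.sqrt (1 - s ^ 2) > ((n : ℝ) - 1) / n)
    (traj : PVTrajectory n)
    (hinit : ∀ i : Fin (traj.N 0),
      (‖traj.pos 0 0 i‖ ^ 2 - 1) / (1 + ‖traj.pos 0 0 i‖ ^ 2) ≤ -Real.sqrt (1 - s ^ 2)) :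
    traj.N traj.m = 0 :=
  annihilation_of_clustered_vortices_general n s hcap traj hinit
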